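/- arXiv:1908.06542 — 6 statements merged into one kernel-verified Lean document; each statement's English description precedes it below -/
import Mathlib

section
/- Let X be a Zariski space and κ an infinite cardinal. A point p ∈ X is κ-separable in X if and only if p is κ-separable in some locally closed subset Y of X containing p, where Y is endowed with the subspace topology (in which case Y is again a Zariski space). -/
/-!
If `p ∈ Y = U ∩ C` with `U` open and `C` closed, then `closure {p} ⊆ C`, so the part of
`closure {p} \ {p}` outside `Y` is the closed set `closure {p} \ U`. In a noetherian sober space a
closed set is the union of the closures of finitely many of its points, so adding these finitely
many points to a family of fewer than `κ` points witnessing separability inside `Y` gives a family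
of fewer than `κ` points (as `κ` is infinite) witnessing separability in `X`. That the closures of
proper specializations of `p` do not contain `p` is where the space being `T₀` enters.
-/

universe u

/-- A Zariski space: a noetherian topological space in which every nonempty irreducible closed
subset is the closure of a unique point. -/
def IsZariskiSpace (X : Type u) [TopologicalSpace X] : Prop :=
  TopologicalSpace.NoetherianSpace X ∧
    ∀ S : Set X, IsClosed S → IsIrreducible S → ∃! p : X, closure {p} = S

/-- A point `p` is `κ`-separable if `closure {p} \ {p}` is the union of the closures `closure {q}`
for `q` running through a subset `Λ` of `closure {p} \ {p}` of cardinality `< κ`. -/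
def KappaSeparable {X : Type u} [TopologicalSpace X] (κ : Cardinal.{u}) (p : X) : Prop :=
  ∃ Λ : Set X, Λ ⊆ closure {p} \ {p} ∧ Cardinal.mk Λ < κ ∧
    closure {p} \ {p} = ⋃ q ∈ Λ, closure {q}

open Set TopologicalSpace

variable {X : Type u} [TopologicalSpace X]

namespace IsZariskiSpace

variable (hX : IsZariskiSpace X)
include hX

theorem noetherianSpace : NoetherianSpace X := hX.1

theorem quasiSober : QuasiSober X :=
  ⟨fun hS hC => (hX.2 _ hC hS).exists⟩

theorem t0Space : T0Space X :=
  ⟨fun _ _ h => (hX.2 _ isClosed_closure isIrreducible_singleton.closure).unique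
    (inseparable_iff_closure_eq.mp h) rfl⟩

end IsZariskiSpace

theorem closure_singleton_subset_closure_diff_singleton [T0Space X] {p q : X}
    (hq : q ∈ closure {p} \ {p}) : closure {q} ⊆ closure {p} \ {p} := by
  intro x hx
  have hpq : p ⤳ q := specializes_iff_mem_closure.mpr hq.1
  have hqx : q ⤳ x := specializes_iff_mem_closure.mpr hx
  refine ⟨specializes_iff_mem_closure.mp (hpq.trans hqx), ?_⟩
  rintro rfl
  exact hq.2 (hqx.antisymm hpq).eq

theorem exists_finite_subset_eq_biUnion_closure_singleton [NoetherianSpace X] [QuasiSober X]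
    {S : Set X} (hS : IsClosed S) :
    ∃ F : Set X, F.Finite ∧ F ⊆ S ∧ S = ⋃ q ∈ F, closure {q} := by
  obtain ⟨T, hTfin, hTcl, hTirr, rfl⟩ := NoetherianSpace.exists_finite_set_isClosed_irreducible hS
  have : Finite T := hTfin.to_subtype
  choose g hg using fun t : T => QuasiSober.sober (hTirr t t.2) (hTcl t t.2)
  refine ⟨range g, finite_range g, ?_, ?_⟩
  · rintro _ ⟨t, rfl⟩
    exact subset_sUnion_of_mem t.2 (hg t).mem
  · rw [biUnion_range, sUnion_eq_iUnion]
    exact iUnion_congr fun t => (hg t).symm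

theorem IsLocallyClosed.isClosed_closure_singleton_diff {Y : Set X} (hY : IsLocallyClosed Y)
    {p : X} (hp : p ∈ Y) : IsClosed (closure {p} \ Y) := by
  obtain ⟨U, C, hU, hC, rfl⟩ := hY
  have hpC : closure {p} ⊆ C := closure_minimal (singleton_subset_iff.mpr hp.2) hC
  have : closure {p} \ (U ∩ C) = closure {p} \ U := by
    rw [sdiff_inter, sdiff_eq_empty.mpr hpC, union_empty]
  exact this ▸ isClosed_closure.sdiff hU

def CoveredBySpecializations (κ : Cardinal.{u}) (p : X) (S : Set X) : Prop :=
  ∃ Λ ⊆ closure {p} \ {p}, Cardinal.mk Λ < κ ∧ S ⊆ ⋃ q ∈ Λ, closure {q}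

namespace CoveredBySpecializations

variable {κ : Cardinal.{u}} {p : X} {S T : Set X}

theorem mono (h : CoveredBySpecializations κ p T) (hST : S ⊆ T) :
    CoveredBySpecializations κ p S :=
  let ⟨Λ, hΛ, hcard, hT⟩ := h
  ⟨Λ, hΛ, hcard, hST.trans hT⟩

theorem union (hκ : Cardinal.aleph0 ≤ κ) (hS : CoveredBySpecializations κ p S)
    (hT : CoveredBySpecializations κ p T) : CoveredBySpecializations κ p (S ∪ T) := by
  obtain ⟨Λ, hΛ, hΛcard, hSΛ⟩ := hS
  obtain ⟨M, hM, hMcard, hTM⟩ := hT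
  refine ⟨Λ ∪ M, union_subset hΛ hM,
    (Cardinal.mk_union_le Λ M).trans_lt (Cardinal.add_lt_of_lt hκ hΛcard hMcard), ?_⟩
  rw [biUnion_union]
  exact union_subset_union hSΛ hTM

theorem of_isClosed [NoetherianSpace X] [QuasiSober X] (hκ : Cardinal.aleph0 ≤ κ)
    (hS : IsClosed S) (hSp : S ⊆ closure {p} \ {p}) : CoveredBySpecializations κ p S := by
  obtain ⟨F, hFfin, hFS, hSF⟩ := exists_finite_subset_eq_biUnion_closure_singleton hS
  exact ⟨F, hFS.trans hSp, hFfin.lt_aleph0.trans_le hκ, hSF.le⟩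

end CoveredBySpecializations

namespace KappaSeparable

variable {κ : Cardinal.{u}}

theorem map_homeomorph {Z : Type u} [TopologicalSpace Z] (e : X ≃ₜ Z) {p : X}
    (h : KappaSeparable κ p) : KappaSeparable κ (e p) := by
  obtain ⟨Λ, hsub, hcard, heq⟩ := h
  have himage : closure {e p} \ {e p} = e '' (closure {p} \ {p}) := by
    rw [← image_singleton, ← e.image_closure, ← image_sdiff e.injective]
  refine ⟨e '' Λ, himage ▸ image_mono hsub, (Cardinal.mk_image_eq e.injective).trans_lt hcard, ?_⟩
  rw [himage, heq, image_iUnion₂, biUnion_image]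
  simp only [e.image_closure, image_singleton]

theorem of_coveredBySpecializations [T0Space X] {p : X}
    (h : CoveredBySpecializations κ p (closure {p} \ {p})) : KappaSeparable κ p := by
  obtain ⟨Λ, hΛ, hcard, hcover⟩ := h
  exact ⟨Λ, hΛ, hcard, hcover.antisymm
    (iUnion₂_subset fun q hq => closure_singleton_subset_closure_diff_singleton (hΛ hq))⟩

theorem coveredBySpecializations_inter_of_subtype {Y : Set X} {p : X} (hp : p ∈ Y)
    (h : KappaSeparable κ (⟨p, hp⟩ : Y)) :
    CoveredBySpecializations κ p ((closure {p} \ {p}) ∩ Y) := by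
  obtain ⟨Λ, hΛ, hcard, hcover⟩ := h
  have mem_closure_iff (x q : Y) : x ∈ closure {q} ↔ (x : X) ∈ closure {(q : X)} := by
    simp only [← specializes_iff_mem_closure, subtype_specializes_iff]
  refine ⟨Subtype.val '' Λ, ?_, Cardinal.mk_image_le.trans_lt hcard, ?_⟩
  · rintro _ ⟨q, hq, rfl⟩
    exact ⟨(mem_closure_iff q _).mp (hΛ hq).1, fun hqp => (hΛ hq).2 (Subtype.ext hqp)⟩
  · rintro x ⟨⟨hxp, hxne⟩, hxY⟩
    have hx : (⟨x, hxY⟩ : Y) ∈ closure {⟨p, hp⟩} \ {⟨p, hp⟩} :=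
      ⟨(mem_closure_iff _ _).mpr hxp, fun h => hxne (congrArg Subtype.val h)⟩
    obtain ⟨q, hq, hxq⟩ := mem_iUnion₂.mp (hcover ▸ hx)
    exact mem_biUnion (mem_image_of_mem _ hq) ((mem_closure_iff _ _).mp hxq)

end KappaSeparable

/-- `κ`-separability (for an infinite cardinal `κ`) can be detected on any locally closed subset
containing the point, endowed with the subspace topology. -/
theorem kappaSeparable_iff_exists_locallyClosed {X : Type u} [TopologicalSpace X]
    (hX : IsZariskiSpace X) (κ : Cardinal.{u}) (hκ : Cardinal.aleph0 ≤ κ) (p : X) :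
    KappaSeparable κ p ↔
      ∃ Y : Set X, IsLocallyClosed Y ∧ ∃ hp : p ∈ Y, KappaSeparable κ (⟨p, hp⟩ : Y) := by
  have := hX.noetherianSpace
  have := hX.quasiSober
  have := hX.t0Space
  refine ⟨fun h => ⟨univ, isOpen_univ.isLocallyClosed, mem_univ p,
    h.map_homeomorph (Homeomorph.Set.univ X).symm⟩, ?_⟩
  rintro ⟨Y, hY, hp, h⟩
  have outside : CoveredBySpecializations κ p (closure {p} \ Y) :=
    .of_isClosed hκ (hY.isClosed_closure_singleton_diff hp)
      fun x hx => ⟨hx.1, fun hxp => hx.2 (hxp ▸ hp)⟩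
  exact .of_coveredBySpecializations
    (((h.coveredBySpecializations_inter_of_subtype hp).union hκ outside).mono
      fun x hx => (em (x ∈ Y)).imp (fun hxY => ⟨hx, hxY⟩) fun hxY => ⟨hx.1, hxY⟩)
end

section
/- Let k be a field of characteristic zero and (R, Δ) a commutative differential k-algebra. For any prime ideal P of R, the Δ-core (P : Δ) is a prime ideal of R. In particular, every Δ-primitive ideal of R is prime. -/
universe u

section DifferentialAlgebra

variable (k R : Type u) [Field k] [CommRing R] [Algebra k R]

/-- `I` is a `Δ`-ideal: it is stable under every derivation in `Δ`. -/
def IsDeltaIdeal (Δ : Set (Derivation k R R)) (I : Ideal R) : Prop :=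
  ∀ δ ∈ Δ, ∀ x ∈ I, δ x ∈ I

/-- `P` is a `Δ`-prime ideal: a prime ideal which is a `Δ`-ideal. -/
def IsDeltaPrime (Δ : Set (Derivation k R R)) (P : Ideal R) : Prop :=
  P.IsPrime ∧ IsDeltaIdeal k R Δ P

/-- The `Δ`-core of an ideal `J`: the largest `Δ`-ideal contained in `J`. -/
def deltaCore (Δ : Set (Derivation k R R)) (J : Ideal R) : Ideal R :=
  sSup {I : Ideal R | IsDeltaIdeal k R Δ I ∧ I ≤ J}

/-- `P` is `Δ`-primitive: it is the `Δ`-core of some maximal ideal. -/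
def IsDeltaPrimitive (Δ : Set (Derivation k R R)) (P : Ideal R) : Prop :=
  ∃ M : Ideal R, M.IsMaximal ∧ deltaCore k R Δ M = P

/-- `Δ`-spec `R`: the set of `Δ`-prime ideals, topologized as a subspace of `Spec R`. -/
abbrev DeltaSpec (Δ : Set (Derivation k R R)) : Type u :=
  {P : PrimeSpectrum R // IsDeltaIdeal k R Δ P.asIdeal}

/-- `P` is `Δ`-rational: whenever `a, b ∈ R` with `b ∉ P` are such that the class of `a/b` in
`Frac(R/P)` is killed by all the induced derivations, that class is algebraic over `k`. -/
def IsDeltaRational (Δ : Set (Derivation k R R)) (P : Ideal R) (hP : P.IsPrime) : Prop :=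
  haveI := hP
  ∀ a b : R, b ∉ P → (∀ δ ∈ Δ, δ a * b - a * δ b ∈ P) →
    IsAlgebraic k
      (algebraMap (R ⧸ P) (FractionRing (R ⧸ P)) (Ideal.Quotient.mk P a) /
       algebraMap (R ⧸ P) (FractionRing (R ⧸ P)) (Ideal.Quotient.mk P b))

/-- `P` is `κ`-separable in `Δ`-spec `R`: there is a set `Λ`, of cardinality `< κ`, of `Δ`-prime
ideals properly containing `P`, such that every `Δ`-prime ideal properly containing `P` contains
a member of `Λ`. -/
def DeltaSeparable (Δ : Set (Derivation k R R)) (κ : Cardinal.{u}) (P : Ideal R) : Prop :=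
  ∃ Λ : Set (Ideal R), (∀ Q ∈ Λ, IsDeltaPrime k R Δ Q ∧ P < Q) ∧
    Cardinal.mk Λ < κ ∧
    ∀ Q : Ideal R, IsDeltaPrime k R Δ Q → P < Q → ∃ Q' ∈ Λ, Q' ≤ Q

/-- `R` satisfies the `Δ`-Dixmier–Moeglin equivalence: for every `Δ`-prime ideal `P`, the
conditions "`{P}` is locally closed in `Δ`-spec `R`", "`P` is `Δ`-primitive", and
"`P` is `Δ`-rational" are equivalent. -/
def DeltaDME (Δ : Set (Derivation k R R)) : Prop :=
  ∀ (P : PrimeSpectrum R) (hP : IsDeltaIdeal k R Δ P.asIdeal),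
    (IsLocallyClosed ({⟨P, hP⟩} : Set (DeltaSpec k R Δ)) ↔ IsDeltaPrimitive k R Δ P.asIdeal) ∧
    (IsDeltaPrimitive k R Δ P.asIdeal ↔ IsDeltaRational k R Δ P.asIdeal P.isPrime)

end DifferentialAlgebra

section Aux

variable {k R : Type u} [Field k] [CommRing R] [Algebra k R]

lemma deltaCore_le_aux (Δ : Set (Derivation k R R)) (J : Ideal R) :
    deltaCore k R Δ J ≤ J :=
  sSup_le fun _ hI => hI.2

lemma isDeltaIdeal_sup_aux {Δ : Set (Derivation k R R)} {I J : Ideal R}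
    (hI : IsDeltaIdeal k R Δ I) (hJ : IsDeltaIdeal k R Δ J) :
    IsDeltaIdeal k R Δ (I ⊔ J) := by
  intro δ hδ x hx
  obtain ⟨a, ha, b, hb, rfl⟩ := Submodule.mem_sup.mp hx
  rw [map_add]
  exact Submodule.add_mem_sup (hI δ hδ a ha) (hJ δ hδ b hb)

lemma deltaCore_isDeltaIdeal_aux (Δ : Set (Derivation k R R)) (J : Ideal R) :
    IsDeltaIdeal k R Δ (deltaCore k R Δ J) := by
  classical
  intro δ hδ x hx
  obtain ⟨s, hsS, hs⟩ := Submodule.mem_sSup_iff_exists_finset.mp hx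
  have key : ∀ t : Finset (Ideal R), (↑t : Set (Ideal R)) ⊆
      {I : Ideal R | IsDeltaIdeal k R Δ I ∧ I ≤ J} →
      IsDeltaIdeal k R Δ (⨆ i ∈ t, i) := by
    intro t
    induction t using Finset.induction_on with
    | empty =>
      intro _ δ' hδ' y hy
      simp only [Finset.notMem_empty, iSup_false, iSup_bot, Submodule.mem_bot] at hy
      simp [hy]
    | insert a t' hnm ih =>
      intro hsub
      rw [Finset.iSup_insert]
      exact isDeltaIdeal_sup_aux
        (hsub (Finset.mem_insert_self a t')).1
        (ih fun i hi => hsub (Finset.mem_insert_of_mem hi))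
  have h1 : δ x ∈ ⨆ i ∈ s, (i : Ideal R) := key s hsS δ hδ x hs
  have h2 : (⨆ i ∈ s, (i : Ideal R)) ≤ deltaCore k R Δ J :=
    iSup₂_le fun i hi => le_sSup (hsS hi)
  exact h2 h1

lemma le_deltaCore_aux {Δ : Set (Derivation k R R)} {I J : Ideal R}
    (hI : IsDeltaIdeal k R Δ I) (hle : I ≤ J) : I ≤ deltaCore k R Δ J :=
  le_sSup ⟨hI, hle⟩

/-- If `Q` is a minimal prime over `I` and `x ∈ Q`, then some multiple `s * x ^ n`
with `s ∉ Q` lies in `I`. -/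
lemma exists_mul_pow_mem_aux {I Q : Ideal R} (hQ : Q ∈ I.minimalPrimes) {x : R}
    (hx : x ∈ Q) : ∃ s ∉ Q, ∃ n : ℕ, s * x ^ n ∈ I := by
  by_contra h
  push_neg at h
  haveI hQP : Q.IsPrime := hQ.1.1
  set T : Submonoid R :=
    { carrier := {y | ∃ s ∉ Q, ∃ n : ℕ, y = s * x ^ n}
      mul_mem' := by
        rintro a b ⟨s, hs, n, rfl⟩ ⟨t, ht, m, rfl⟩
        exact ⟨s * t, fun hst => ((hQP.mem_or_mem hst).elim hs ht), n + m, by ring⟩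
      one_mem' := ⟨1, fun h1 => hQP.ne_top (Ideal.eq_top_iff_one Q |>.mpr h1), 0, by ring⟩ }
    with hT
  have hdisj : Disjoint (I : Set R) (T : Set R) := by
    rw [Set.disjoint_left]
    rintro y hyI ⟨s, hs, n, rfl⟩
    exact h s hs n hyI
  obtain ⟨p, hp, hIp, hpT⟩ := Ideal.exists_le_prime_disjoint I T hdisj
  have hpQ : p ≤ Q := by
    intro y hy
    by_contra hyQ
    exact Set.disjoint_left.mp hpT hy ⟨y, hyQ, 0, by ring⟩
  have hQp : Q ≤ p := hQ.2 ⟨hp, hIp⟩ hpQ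
  exact Set.disjoint_left.mp hpT (hQp hx) ⟨1, fun h1 =>
    hQP.ne_top (Ideal.eq_top_iff_one Q |>.mpr h1), 1, by ring⟩

/-- Characteristic-zero key step: if `c * x ^ n ∈ I` with `c ∉ Q`, `x ∈ Q`,
`I` a `Δ`-ideal contained in the prime `Q`, then `δ x ∈ Q`. -/
lemma deriv_mem_aux [CharZero k] {Δ : Set (Derivation k R R)} {I Q : Ideal R}
    (hI : IsDeltaIdeal k R Δ I) (hQP : Q.IsPrime) (hIQ : I ≤ Q)
    {δ : Derivation k R R} (hδ : δ ∈ Δ) {x : R} (hx : x ∈ Q) :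
    ∀ n : ℕ, ∀ c : R, c ∉ Q → c * x ^ n ∈ I → δ x ∈ Q := by
  intro n
  induction n with
  | zero =>
    intro c hc hcx
    rw [pow_zero, mul_one] at hcx
    exact absurd (hIQ hcx) hc
  | succ n ih =>
    intro c hc hcx
    have hunit : ∃ u : R, u * ((n : R) + 1) = 1 := by
      refine ⟨algebraMap k R ((n : k) + 1)⁻¹, ?_⟩
      have : ((n : R) + 1) = algebraMap k R ((n : k) + 1) := by
        push_cast
        simp
      rw [this, ← map_mul]
      rw [inv_mul_cancel₀ (Nat.cast_add_one_ne_zero n)]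
      simp
    obtain ⟨u, hu⟩ := hunit
    have hd1 : δ (c * x ^ (n + 1)) ∈ I := hI δ hδ _ hcx
    have hd2 : c * δ (c * x ^ (n + 1)) ∈ I := I.mul_mem_left _ hd1
    have hd3 : δ c * (c * x ^ (n + 1)) ∈ I := I.mul_mem_left _ hcx
    have hkey : ((n : R) + 1) * (c ^ 2 * x ^ n * δ x) ∈ I := by
      have heq : ((n : R) + 1) * (c ^ 2 * x ^ n * δ x)
          = c * δ (c * x ^ (n + 1)) - δ c * (c * x ^ (n + 1)) := by
        rw [Derivation.leibniz, Derivation.leibniz_pow]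
        simp only [smul_eq_mul, nsmul_eq_mul, Nat.add_sub_cancel]
        push_cast
        ring
      rw [heq]
      exact I.sub_mem hd2 hd3
    have hkey2 : c ^ 2 * x ^ n * δ x ∈ I := by
      have : c ^ 2 * x ^ n * δ x = u * (((n : R) + 1) * (c ^ 2 * x ^ n * δ x)) := by
        linear_combination (-(c ^ 2 * x ^ n * δ x)) * hu
      rw [this]
      exact I.mul_mem_left _ hkey
    by_cases hdx : δ x ∈ Q
    · exact hdx
    · refine ih (c ^ 2 * δ x) ?_ (by rw [show c ^ 2 * δ x * x ^ n
        = c ^ 2 * x ^ n * δ x by ring]; exact hkey2)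
      intro hmem
      rcases hQP.mem_or_mem hmem with h1 | h1
      · exact hc ((hQP.mem_or_mem (by rwa [← sq])).elim id id)
      · exact hdx h1

end Aux

/-- The `Δ`-core of a prime ideal is prime; in particular every `Δ`-primitive ideal is prime. -/
theorem deltaCore_isPrime (k R : Type u) [Field k] [CharZero k] [CommRing R] [Algebra k R]
    (Δ : Set (Derivation k R R)) :
    (∀ P : Ideal R, P.IsPrime → (deltaCore k R Δ P).IsPrime) ∧
    (∀ P : Ideal R, IsDeltaPrimitive k R Δ P → P.IsPrime) := by
  have main : ∀ P : Ideal R, P.IsPrime → (deltaCore k R Δ P).IsPrime := by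
    intro P hP
    obtain ⟨Q, hQmin, hQP⟩ := Ideal.exists_minimalPrimes_le (deltaCore_le_aux Δ P)
    haveI hQprime : Q.IsPrime := hQmin.1.1
    have hIQ : deltaCore k R Δ P ≤ Q := hQmin.1.2
    have hQdelta : IsDeltaIdeal k R Δ Q := by
      intro δ hδ x hx
      obtain ⟨s, hs, n, hsxn⟩ := exists_mul_pow_mem_aux hQmin hx
      exact deriv_mem_aux (deltaCore_isDeltaIdeal_aux Δ P) hQprime hIQ hδ hx n s hs hsxn
    have heq : deltaCore k R Δ P = Q :=
      le_antisymm hIQ (le_deltaCore_aux hQdelta hQP)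
    rw [heq]
    exact hQprime
  refine ⟨main, ?_⟩
  rintro P ⟨M, hM, rfl⟩
  exact main M hM.isPrime
end

section
/- Let k be a field of characteristic zero and (R, Δ) a commutative differential k-algebra with R noetherian. For any Δ-ideal I of R, every prime ideal of R minimal over I is itself a Δ-ideal (hence a Δ-prime ideal), and the set of Δ-prime ideals minimal over I is finite. -/
universe u

section Aux

variable {k R : Type u} [Field k] [CharZero k] [CommRing R] [Algebra k R]

/-- Kaplansky's lemma: in char 0, if `a ^ n ∈ I` for a `δ`-stable ideal `I`,
then `(δ a) ^ (2 * n) ∈ I`. -/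
lemma pow_deriv_mem (δ : Derivation k R R) (I : Ideal R) (hI : ∀ x ∈ I, δ x ∈ I)
    (a : R) (n : ℕ) (ha : a ^ n ∈ I) : δ a ^ (2 * n) ∈ I := by
  suffices h : ∀ j m : ℕ, j + m = n → a ^ m * δ a ^ (2 * j) ∈ I by
    simpa using h n 0 (by simp)
  intro j
  induction j with
  | zero => intro m hm; subst hm; simpa using ha
  | succ j ih =>
    intro m hm
    have A : a ^ (m + 1) * δ a ^ (2 * j) ∈ I := ih (m + 1) (by omega)
    have h1 : δ (a ^ (m + 1) * δ a ^ (2 * j)) ∈ I := hI _ A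
    have key : ((m : R) + 1) * (a ^ m * δ a ^ (2 * (j + 1))) ∈ I := by
      have hid : ((m : R) + 1) * (a ^ m * δ a ^ (2 * (j + 1))) =
          δ a * δ (a ^ (m + 1) * δ a ^ (2 * j))
            - (2 * j : ℕ) * (a ^ (m + 1) * δ a ^ (2 * j)) * δ (δ a) := by
        rw [Derivation.leibniz, Derivation.leibniz_pow, Derivation.leibniz_pow]
        cases j with
        | zero => simp; ring
        | succ j =>
          simp only [smul_eq_mul, Nat.add_sub_cancel, nsmul_eq_mul]
          rw [show 2 * (j + 1) - 1 = 2 * j + 1 from by omega]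
          push_cast
          ring
      rw [hid]
      exact Ideal.sub_mem _ (Ideal.mul_mem_left _ _ h1)
        (Ideal.mul_mem_right _ _ (Ideal.mul_mem_left _ _ A))
    have hu : (algebraMap k R ((m : k) + 1)⁻¹) * ((m : R) + 1) = 1 := by
      have : ((m : R) + 1) = algebraMap k R ((m : k) + 1) := by push_cast; simp
      rw [this, ← map_mul, inv_mul_cancel₀ (Nat.cast_add_one_ne_zero m),
        map_one]
    have := Ideal.mul_mem_left I (algebraMap k R ((m : k) + 1)⁻¹) key
    rwa [← mul_assoc, hu, one_mul] at this

lemma radical_stable (δ : Derivation k R R) (I : Ideal R) (hI : ∀ x ∈ I, δ x ∈ I) :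
    ∀ x ∈ I.radical, δ x ∈ I.radical := by
  intro x hx
  obtain ⟨n, hn⟩ := hx
  exact ⟨2 * n, pow_deriv_mem δ I hI x n hn⟩

end Aux

/-- Over a noetherian ring, every prime minimal over a `Δ`-ideal is a `Δ`-ideal, and the set of
`Δ`-prime ideals minimal over a `Δ`-ideal is finite. -/
theorem minimalPrimes_isDeltaIdeal_and_finite (k R : Type u) [Field k] [CharZero k] [CommRing R]
    [Algebra k R] [IsNoetherianRing R]
    (Δ : Set (Derivation k R R)) (I : Ideal R) (hI : IsDeltaIdeal k R Δ I) :
    (∀ P ∈ I.minimalPrimes, IsDeltaIdeal k R Δ P) ∧ I.minimalPrimes.Finite := by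
  have hfin : I.minimalPrimes.Finite := by
    rw [Ideal.minimalPrimes_eq_comap]
    exact (minimalPrimes.finite_of_isNoetherianRing (R ⧸ I)).image _
  refine ⟨?_, hfin⟩
  intro P hP δ hδ x hx
  have hPp : P.IsPrime := hP.1.1
  have hSfin : (I.minimalPrimes \ {P}).Finite := hfin.diff
  have hnot : ¬ sInf (I.minimalPrimes \ {P}) ≤ P := by
    intro hle
    have h1 : hSfin.toFinset.inf id ≤ P := by
      rwa [Finset.inf_id_eq_sInf, hSfin.coe_toFinset]
    obtain ⟨Q, hQmem, hQle⟩ := hPp.inf_le'.mp h1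
    rw [Set.Finite.mem_toFinset] at hQmem
    exact hQmem.2 (le_antisymm hQle (hP.2 hQmem.1.1 hQle))
  obtain ⟨y, hyS, hyP⟩ := SetLike.not_le_iff_exists.mp hnot
  have hxy : x * y ∈ I.radical := by
    rw [← Ideal.sInf_minimalPrimes]
    refine Submodule.mem_sInf.mpr fun Q hQ => ?_
    by_cases hQP : Q = P
    · exact Ideal.mul_mem_right _ Q (hQP ▸ hx)
    · exact Ideal.mul_mem_left Q _ (Submodule.mem_sInf.mp hyS Q ⟨hQ, hQP⟩)
  have hradP : I.radical ≤ P := by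
    rw [← Ideal.sInf_minimalPrimes]; exact sInf_le hP
  have h2 : δ (x * y) ∈ P := hradP (radical_stable δ I (hI δ hδ) _ hxy)
  rw [Derivation.leibniz, smul_eq_mul, smul_eq_mul] at h2
  have h3 : y * δ x ∈ P := by
    have h4 : x * δ y ∈ P := P.mul_mem_right _ hx
    have := P.sub_mem h2 h4
    simpa using this
  exact (hPp.mem_or_mem h3).resolve_left hyP
end

section
/- Let k be a field of characteristic zero and (R, Δ) a commutative differential k-algebra with R noetherian and dim_k R < |k| (the k-vector-space dimension of R is strictly less than the cardinality of k). Then every Δ-prime ideal P of R is an intersection of Δ-primitive ideals; more precisely, P = ⋂ (M : Δ), the intersection ranging over all maximal ideals M of R containing P. -/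
universe u

/-- Amitsur's trick: a domain `A` over a characteristic-zero field `k` with
`dim_k A < |k|` has trivial Jacobson radical. -/
theorem jacobson_bot_eq_bot_of_rank_lt (k A : Type u) [Field k] [CharZero k] [CommRing A]
    [IsDomain A] [Algebra k A] (hrankA : Module.rank k A < Cardinal.mk k) :
    Ideal.jacobson (⊥ : Ideal A) = ⊥ := by
  rw [eq_bot_iff]
  intro a ha
  rw [Ideal.mem_bot]
  by_contra hne
  rw [Ideal.mem_jacobson_bot] at ha
  set K := FractionRing A
  have hinj : Function.Injective (algebraMap A K) := IsFractionRing.injective A K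
  set x := algebraMap A K a with hxdef
  -- for each nonzero μ, a - μ•1 is a unit of A
  have hunit : ∀ μ : k, μ ≠ 0 → IsUnit (a - algebraMap k A μ) := by
    intro μ hμ
    have h1 := ha (algebraMap k A (-μ⁻¹))
    have h2 : IsUnit (algebraMap k A (-μ)) :=
      IsUnit.of_mul_eq_one (algebraMap k A (-μ)⁻¹)
        (by rw [← map_mul, mul_inv_cancel₀ (by simpa using hμ), map_one])
    have h3 : algebraMap k A (-μ) * algebraMap k A (-μ⁻¹) = 1 := by
      rw [← map_mul, neg_mul_neg, mul_inv_cancel₀ hμ, map_one]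
    have key : a - algebraMap k A μ =
        algebraMap k A (-μ) * (a * algebraMap k A (-μ⁻¹) + 1) := by
      calc a - algebraMap k A μ
          = a * (algebraMap k A (-μ) * algebraMap k A (-μ⁻¹)) + algebraMap k A (-μ) := by
            rw [h3, mul_one, map_neg]; ring
        _ = algebraMap k A (-μ) * (a * algebraMap k A (-μ⁻¹) + 1) := by ring
    rw [key]
    exact h2.mul h1
  -- choose explicit inverses in A
  have hbex : ∀ μ : {μ : k // μ ≠ 0}, ∃ b : A,
      algebraMap A K b = (x - algebraMap k K μ.1)⁻¹ := by
    rintro ⟨μ, hμ⟩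
    obtain ⟨u, hu⟩ := hunit μ hμ
    refine ⟨(↑u⁻¹ : Aˣ), ?_⟩
    have htow : algebraMap k K μ = algebraMap A K (algebraMap k A μ) :=
      (IsScalarTower.algebraMap_apply k A K μ)
    have hmul : algebraMap A K (↑u⁻¹ : A) * (x - algebraMap k K μ) = 1 := by
      rw [htow, hxdef, ← map_sub, ← hu, ← map_mul, Units.inv_mul, map_one]
    exact eq_inv_of_mul_eq_one_left hmul
  choose b hb using hbex
  have hx0 : x ≠ 0 := fun h => hne (hinj (by rwa [map_zero]))
  -- x is algebraic over k
  have hxalg : IsAlgebraic k x := by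
    by_contra htr
    have hli := (Transcendental.linearIndependent_sub_inv (F := k) (E := K) htr).comp
      (Subtype.val : {μ : k // μ ≠ 0} → k) Subtype.val_injective
    have hcomp : (IsScalarTower.toAlgHom k A K).toLinearMap ∘ b =
        fun μ : {μ : k // μ ≠ 0} => (x - algebraMap k K μ.1)⁻¹ := funext fun μ => hb μ
    have hli2 : LinearIndependent k b :=
      LinearIndependent.of_comp (IsScalarTower.toAlgHom k A K).toLinearMap
        (by rw [show ((IsScalarTower.toAlgHom k A K).toLinearMap : A → K) ∘ b =
              fun μ : {μ : k // μ ≠ 0} => (x - algebraMap k K μ.1)⁻¹ from hcomp]; exact hli)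
    have hcard := hli2.cardinal_le_rank
    have hmkeq : Cardinal.mk {μ : k // μ ≠ 0} = Cardinal.mk k := by
      have h1 : Cardinal.mk (↥({0}ᶜ : Set k)) = Cardinal.mk k :=
        Cardinal.mk_compl_of_infinite ({0} : Set k)
          (by rw [Cardinal.mk_singleton]
              exact Cardinal.one_lt_aleph0.trans_le (Cardinal.aleph0_le_mk k))
      rw [← h1]
      exact Cardinal.mk_congr (Equiv.subtypeEquivRight fun z => by
        simp [Set.mem_compl_singleton_iff])
    rw [hmkeq] at hcard
    exact absurd (hcard.trans_lt hrankA) (lt_irrefl _)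
  -- then a is a unit, contradicting a ∈ Jacobson radical
  have hint : IsIntegral k x := hxalg.isIntegral
  have hmem := hint.inv_mem_adjoin
  rw [Algebra.adjoin_singleton_eq_range_aeval] at hmem
  obtain ⟨q, hq⟩ := hmem
  have hq2 : Polynomial.aeval x q = x⁻¹ := hq
  have hq' : x * Polynomial.aeval x q = 1 := by
    rw [hq2]; exact mul_inv_cancel₀ hx0
  have haeval : Polynomial.aeval x q = algebraMap A K (Polynomial.aeval a q) := by
    rw [hxdef, Polynomial.aeval_algebraMap_apply]
  have hone : algebraMap A K (a * Polynomial.aeval a q) = algebraMap A K 1 := by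
    rw [map_one, map_mul, ← haeval]; exact hq'
  have hAq : a * Polynomial.aeval a q = 1 := hinj hone
  have hbad := ha (-(Polynomial.aeval a q))
  rw [mul_neg, hAq, neg_add_cancel] at hbad
  exact not_isUnit_zero hbad

/-- If `R` is noetherian with `dim_k R < |k|`, then every `Δ`-prime ideal `P` is the intersection
of the `Δ`-cores `(M : Δ)` over all maximal ideals `M` containing `P`; in particular it is an
intersection of `Δ`-primitive ideals. -/
theorem deltaPrime_eq_iInf_deltaCore_maximal (k R : Type u) [Field k] [CharZero k] [CommRing R]
    [Algebra k R] [IsNoetherianRing R]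
    (hrank : Module.rank k R < Cardinal.mk k)
    (Δ : Set (Derivation k R R)) (P : Ideal R) (hP : IsDeltaPrime k R Δ P) :
    P = ⨅ M : {M : Ideal R // M.IsMaximal ∧ P ≤ M}, deltaCore k R Δ M.1 := by
  obtain ⟨hPprime, hPdelta⟩ := hP
  apply le_antisymm
  · exact le_iInf fun M => le_sSup ⟨hPdelta, M.2.2⟩
  · have hjac : P.jacobson = P := by
      rw [Ideal.jacobson_eq_iff_jacobson_quotient_eq_bot]
      haveI := hPprime
      have hsurj : Function.Surjective ((Ideal.Quotient.mkₐ k P).toLinearMap) :=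
        Ideal.Quotient.mk_surjective
      have hrk : Module.rank k (R ⧸ P) < Cardinal.mk k :=
        lt_of_le_of_lt (LinearMap.rank_le_of_surjective _ hsurj) hrank
      exact jacobson_bot_eq_bot_of_rank_lt k (R ⧸ P) hrk
    have h1 : (⨅ M : {M : Ideal R // M.IsMaximal ∧ P ≤ M}, deltaCore k R Δ M.1) ≤
        ⨅ M : {M : Ideal R // M.IsMaximal ∧ P ≤ M}, M.1 :=
      iInf_mono fun M => sSup_le fun I hI => hI.2
    have h2 : (⨅ M : {M : Ideal R // M.IsMaximal ∧ P ≤ M}, M.1) ≤ P.jacobson :=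
      le_sInf fun J hJ => iInf_le_of_le ⟨J, hJ.2, hJ.1⟩ le_rfl
    exact h1.trans (h2.trans hjac.le)
end

section
/- Let k be a field of characteristic zero and (R, Δ) a commutative differential k-algebra with R noetherian. For a Δ-prime ideal P of R, the following are equivalent: (i) {P} is locally closed in Δ-spec R; (ii) the intersection of all Δ-prime ideals properly containing P is a Δ-ideal properly containing P; (iii) P is ℵ₀-separable in the topological space Δ-spec R, i.e. there are finitely many Δ-prime ideals Q₁, …, Qₙ properly containing P such that every Δ-prime ideal properly containing P contains some Qᵢ. -/
universe u

section AuxLemmas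

variable (k R : Type u) [Field k] [CharZero k] [CommRing R] [Algebra k R]

include k in
lemma natCast_mul_mem {J : Ideal R} {x : R} {n : ℕ} (hn : n ≠ 0)
    (h : (n : R) * x ∈ J) : x ∈ J := by
  have hu : IsUnit ((n : R)) := by
    rw [← map_natCast (algebraMap k R) n]
    exact (isUnit_iff_ne_zero.mpr (by exact_mod_cast hn)).map (algebraMap k R)
  obtain ⟨u, hu⟩ := hu
  have h2 := J.mul_mem_left (↑u⁻¹) h
  rwa [← mul_assoc, ← hu, Units.inv_mul, one_mul] at h2

lemma step_lemma (J : Ideal R) (δ : Derivation k R R) (hJ : ∀ x ∈ J, δ x ∈ J)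
    (x : R) (m e : ℕ) (h : x ^ (m + 1) * δ x ^ (2 * e + 1) ∈ J) :
    x ^ m * δ x ^ (2 * e + 3) ∈ J := by
  have h1 := hJ _ h
  rw [Derivation.leibniz, Derivation.leibniz_pow, Derivation.leibniz_pow] at h1
  simp only [Nat.add_sub_cancel, smul_eq_mul, nsmul_eq_mul, smul_smul] at h1
  have h2 := J.mul_mem_left (δ x) h1
  have h3 := J.mul_mem_right (((2 * e + 1 : ℕ) : R) * δ (δ x)) h
  have h4 := J.sub_mem h2 h3
  have h5 : ((m + 1 : ℕ) : R) * (x ^ m * δ x ^ (2 * e + 3)) ∈ J := by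
    convert h4 using 1
    push_cast
    ring
  exact natCast_mul_mem k R (Nat.succ_ne_zero m) h5

lemma isDeltaIdeal_radical (Δ : Set (Derivation k R R)) (J : Ideal R)
    (hJ : IsDeltaIdeal k R Δ J) : IsDeltaIdeal k R Δ J.radical := by
  intro δ hδ x hx
  obtain ⟨n, hn⟩ := hx
  cases n with
  | zero =>
    have : J = ⊤ := by simpa [Ideal.eq_top_iff_one] using hn
    rw [this]
    exact ⟨1, trivial⟩
  | succ m =>
    have hind : ∀ i, i ≤ m → x ^ (m - i) * δ x ^ (2 * i + 1) ∈ J := by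
      intro i
      induction i with
      | zero =>
        intro _
        have h1 := hJ δ hδ _ hn
        rw [Derivation.leibniz_pow] at h1
        simp only [Nat.add_sub_cancel, smul_eq_mul, nsmul_eq_mul] at h1
        have h5 : ((m + 1 : ℕ) : R) * (x ^ (m - 0) * δ x ^ (2 * 0 + 1)) ∈ J := by
          convert h1 using 1
          simp only [Nat.sub_zero]
          push_cast
          ring
        exact natCast_mul_mem k R (Nat.succ_ne_zero m) h5
      | succ i ih =>
        intro hi
        have hi' : i ≤ m := Nat.le_of_succ_le hi
        have hm : m - i = (m - (i + 1)) + 1 := by omega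
        have h := ih hi'
        rw [hm] at h
        have hstep := step_lemma k R J δ (hJ δ hδ) x (m - (i + 1)) i h
        have he : 2 * i + 3 = 2 * (i + 1) + 1 := by ring
        rwa [he] at hstep
    have hfin := hind m le_rfl
    simp only [Nat.sub_self, pow_zero, one_mul] at hfin
    exact ⟨2 * m + 1, hfin⟩

lemma rad_mul (I : Ideal R) (hrad : I.radical = I) (δ : Derivation k R R)
    (hI : ∀ x ∈ I, δ x ∈ I) {a b : R} (hab : a * b ∈ I) : a * δ b ∈ I := by
  have h1 := hI _ hab
  rw [Derivation.leibniz] at h1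
  simp only [smul_eq_mul] at h1
  have h2 := I.mul_mem_left (a * δ b) h1
  have h3 := I.mul_mem_right (δ a * δ b) hab
  have h4 := I.sub_mem h2 h3
  have key : a * δ b * (a * δ b + b * δ a) - a * b * (δ a * δ b) = (a * δ b) ^ 2 := by ring
  rw [key] at h4
  have hsq : a * δ b ∈ I.radical := ⟨2, h4⟩
  rwa [hrad] at hsq

lemma minimalPrimes_finite [IsNoetherianRing R] (J : Ideal R) : J.minimalPrimes.Finite := by
  rw [Ideal.minimalPrimes_eq_comap]
  exact ((minimalPrimes.finite_of_isNoetherianRing (R ⧸ J)).image _)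

lemma minimalPrime_isDeltaIdeal [IsNoetherianRing R] (Δ : Set (Derivation k R R))
    (J : Ideal R) (hJ : IsDeltaIdeal k R Δ J) {P' : Ideal R}
    (hP' : P' ∈ J.minimalPrimes) : IsDeltaIdeal k R Δ P' := by
  have hPprime : P'.IsPrime := hP'.1.1
  have hJP' : J ≤ P' := hP'.1.2
  have hradP' : J.radical ≤ P' := hPprime.radical_le_iff.mpr hJP'
  have hIrad : J.radical.radical = J.radical := J.radical_idem
  have hIΔ := isDeltaIdeal_radical k R Δ J hJ
  have hfin : (J.minimalPrimes \ {P'}).Finite := (minimalPrimes_finite R J).diff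
  have hs : ∃ s ∈ sInf (J.minimalPrimes \ {P'}), s ∉ P' := by
    by_contra hcon
    push_neg at hcon
    have hle : sInf (J.minimalPrimes \ {P'}) ≤ P' := hcon
    rw [← Set.Finite.coe_toFinset hfin, ← Finset.inf_id_eq_sInf] at hle
    obtain ⟨Q, hQmem, hQle⟩ := (hPprime.inf_le').mp hle
    rw [Set.Finite.mem_toFinset] at hQmem
    have hQeq : P' ≤ Q := hP'.2 ⟨(hQmem.1).1.1, (hQmem.1).1.2⟩ hQle
    exact hQmem.2 (le_antisymm hQle hQeq)
  obtain ⟨s, hsmem, hsP⟩ := hs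
  intro δ hδ x hx
  have hxs : s * x ∈ J.radical := by
    rw [← Ideal.sInf_minimalPrimes, Ideal.mem_sInf]
    intro Q hQ
    by_cases hQP : Q = P'
    · subst hQP; exact Q.mul_mem_left s hx
    · exact Q.mul_mem_right x (Ideal.mem_sInf.mp hsmem ⟨hQ, hQP⟩)
  have hmul := rad_mul k R J.radical hIrad δ (hIΔ δ hδ) hxs
  have hmem : s * δ x ∈ P' := hradP' hmul
  exact (hPprime.mem_or_mem hmem).resolve_left hsP

end AuxLemmas


/-- For a `Δ`-prime ideal `P` of a noetherian `R`, the following are equivalent: `{P}` is locally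
closed in `Δ`-spec `R`; the intersection of all `Δ`-prime ideals properly containing `P` is a
`Δ`-ideal properly containing `P`; `P` is `ℵ₀`-separable in `Δ`-spec `R`, i.e. there are finitely
many `Δ`-prime ideals properly containing `P` such that every `Δ`-prime ideal properly containing
`P` contains one of them. -/
theorem deltaPrime_locallyClosed_tfae (k R : Type u) [Field k] [CharZero k] [CommRing R]
    [Algebra k R] [IsNoetherianRing R]
    (Δ : Set (Derivation k R R)) (P : PrimeSpectrum R) (hP : IsDeltaIdeal k R Δ P.asIdeal) :
    List.TFAE [
      IsLocallyClosed ({⟨P, hP⟩} : Set (DeltaSpec k R Δ)),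
      IsDeltaIdeal k R Δ (sInf {Q : Ideal R | IsDeltaPrime k R Δ Q ∧ P.asIdeal < Q}) ∧
        P.asIdeal < sInf {Q : Ideal R | IsDeltaPrime k R Δ Q ∧ P.asIdeal < Q},
      ∃ S : Set (Ideal R), S.Finite ∧ (∀ Q ∈ S, IsDeltaPrime k R Δ Q ∧ P.asIdeal < Q) ∧
        ∀ Q : Ideal R, IsDeltaPrime k R Δ Q → P.asIdeal < Q → ∃ Q' ∈ S, Q' ≤ Q] := by
  tfae_have 1 → 2
  · intro h
    constructor
    · intro δ hδ x hx
      rw [Ideal.mem_sInf] at hx ⊢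
      intro Q hQ
      exact hQ.1.2 δ hδ x (hx hQ)
    · obtain ⟨U, Z, hU, hZ, hUZ⟩ := h
      obtain ⟨V, hV, hVU⟩ := isOpen_induced_iff.mp hU
      obtain ⟨C, hC, hCZ⟩ := isClosed_induced_iff.mp hZ
      have hPmem : (⟨P, hP⟩ : DeltaSpec k R Δ) ∈ U ∩ Z := by
        rw [← hUZ]; rfl
      obtain ⟨T, hT⟩ := (PrimeSpectrum.isOpen_iff V).mp hV
      obtain ⟨T', hT'⟩ := (PrimeSpectrum.isClosed_iff_zeroLocus C).mp hC
      have hPV : P ∈ V := by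
        have := hPmem.1
        rw [← hVU] at this
        exact this
      have hTP : ¬ (T ⊆ (P.asIdeal : Set R)) := by
        intro hsub
        have : P ∈ Vᶜ := by rw [hT]; exact hsub
        exact this hPV
      obtain ⟨f, hfT, hfP⟩ := Set.not_subset.mp hTP
      have hfS : f ∈ sInf {Q : Ideal R | IsDeltaPrime k R Δ Q ∧ P.asIdeal < Q} := by
        rw [Ideal.mem_sInf]
        intro Q hQ
        by_contra hfQ
        set q : DeltaSpec k R Δ := ⟨⟨Q, hQ.1.1⟩, hQ.1.2⟩ with hq
        have hqU : q ∈ U := by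
          rw [← hVU]
          show q.val ∈ V
          by_contra h'
          have : q.val ∈ Vᶜ := h'
          rw [hT] at this
          exact hfQ (this hfT)
        have hqZ : q ∈ Z := by
          rw [← hCZ]
          show q.val ∈ C
          have hPC : P ∈ C := by
            have := hPmem.2
            rw [← hCZ] at this
            exact this
          rw [hT'] at hPC ⊢
          exact fun t ht => hQ.2.le (hPC ht)
        have hqP : q = (⟨P, hP⟩ : DeltaSpec k R Δ) := by
          have : q ∈ ({(⟨P, hP⟩ : DeltaSpec k R Δ)} : Set (DeltaSpec k R Δ)) := by
            rw [hUZ]; exact ⟨hqU, hqZ⟩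
          exact this
        have : Q = P.asIdeal := congrArg (fun t => t.val.asIdeal) hqP
        exact (hQ.2.ne' this)
      refine lt_of_le_of_ne (le_sInf fun Q hQ => hQ.2.le) ?_
      intro heq
      apply hfP
      show f ∈ (P.asIdeal : Set R)
      rw [heq]
      exact hfS
  tfae_have 2 → 1
  · intro h2
    obtain ⟨f, hfJ, hfP⟩ := SetLike.exists_of_lt h2.2
    refine ⟨Subtype.val ⁻¹' (PrimeSpectrum.basicOpen f : Set (PrimeSpectrum R)),
        Subtype.val ⁻¹' (PrimeSpectrum.zeroLocus (P.asIdeal : Set R)),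
        (PrimeSpectrum.isOpen_basicOpen).preimage continuous_subtype_val,
        (PrimeSpectrum.isClosed_zeroLocus _).preimage continuous_subtype_val, ?_⟩
    ext q
    simp only [Set.mem_singleton_iff, Set.mem_inter_iff, Set.mem_preimage,
      PrimeSpectrum.mem_basicOpen, PrimeSpectrum.mem_zeroLocus]
    constructor
    · rintro rfl
      exact ⟨hfP, le_rfl⟩
    · rintro ⟨hq1, hq2⟩
      by_contra hne
      have hlt : P.asIdeal < q.val.asIdeal := by
        refine lt_of_le_of_ne hq2 ?_
        intro he
        exact hne (Subtype.ext (PrimeSpectrum.ext he.symm))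
      have hfq : f ∈ q.val.asIdeal :=
        Ideal.mem_sInf.mp hfJ ⟨⟨q.val.isPrime, q.2⟩, hlt⟩
      exact hq1 hfq
  tfae_have 2 → 3
  · intro h2
    refine ⟨(sInf {Q : Ideal R | IsDeltaPrime k R Δ Q ∧ P.asIdeal < Q}).minimalPrimes,
      minimalPrimes_finite R _, ?_, ?_⟩
    · intro Q' hQ'
      exact ⟨⟨hQ'.1.1, minimalPrime_isDeltaIdeal k R Δ _ h2.1 hQ'⟩,
        lt_of_lt_of_le h2.2 hQ'.1.2⟩
    · intro Q hQ hPQ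
      haveI := hQ.1
      exact Ideal.exists_minimalPrimes_le (sInf_le (show Q ∈ _ from ⟨hQ, hPQ⟩))
  tfae_have 3 → 2
  · rintro ⟨S, hSfin, hSmem, hcov⟩
    constructor
    · intro δ hδ x hx
      rw [Ideal.mem_sInf] at hx ⊢
      intro Q hQ
      exact hQ.1.2 δ hδ x (hx hQ)
    · have hle : P.asIdeal ≤ sInf {Q : Ideal R | IsDeltaPrime k R Δ Q ∧ P.asIdeal < Q} :=
        le_sInf fun Q hQ => hQ.2.le
      have hSle : sInf S ≤ sInf {Q : Ideal R | IsDeltaPrime k R Δ Q ∧ P.asIdeal < Q} := by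
        refine le_sInf fun Q hQ => ?_
        obtain ⟨Q', hQ'S, hQ'le⟩ := hcov Q hQ.1 hQ.2
        exact (sInf_le hQ'S).trans hQ'le
      have hnot : ¬ sInf S ≤ P.asIdeal := by
        intro hle'
        rw [← Set.Finite.coe_toFinset hSfin, ← Finset.inf_id_eq_sInf] at hle'
        obtain ⟨Q, hQ, hQle⟩ := (P.isPrime.inf_le').mp hle'
        rw [Set.Finite.mem_toFinset] at hQ
        exact (hSmem Q hQ).2.not_ge hQle
      refine lt_of_le_of_ne hle ?_
      intro heq
      apply hnot
      rw [heq]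
      exact hSle
  tfae_finish
end

section
/- Let k be a field of characteristic zero, (R, Δ) a commutative differential k-algebra with R an integral domain, and K/k a field extension such that Frac(R) ⊗_k K is an integral domain. Each δ ∈ Δ extends to the K-linear derivation δ ⊗ 1 of R ⊗_k K. If the zero ideal of R is Δ-rational, then every nonzero ideal of R ⊗_k K that is stable under δ ⊗ 1 for all δ ∈ Δ contains an element of the form r ⊗ 1 for some nonzero r ∈ R. -/
universe u

open scoped TensorProduct

lemma repr_rTensor_derivation {k R K : Type u} [Field k] [CommRing R] [Algebra k R]
    [Field K] [Algebra k K] {ι : Type u} (bK : Module.Basis ι k K) (δ : Derivation k R R)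
    (x : R ⊗[k] K) (i : ι) :
    (bK.baseChange R).repr (δ.toLinearMap.rTensor K x) i
      = δ ((bK.baseChange R).repr x i) := by
  induction x using TensorProduct.induction_on with
  | zero => simp
  | tmul r c => simp [Module.Basis.baseChange_repr_tmul]
  | add x y hx hy => simp [hx, hy]

lemma tmul_one_mul_eq_smul {k R K : Type u} [Field k] [CommRing R] [Algebra k R]
    [Field K] [Algebra k K] (a : R) (w : R ⊗[k] K) :
    (a ⊗ₜ[k] (1 : K)) * w = a • w := by
  induction w using TensorProduct.induction_on with
  | zero => simp
  | tmul r c => simp [Algebra.TensorProduct.tmul_mul_tmul, TensorProduct.smul_tmul']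
  | add x y hx hy => simp [mul_add, hx, hy]

lemma basis_sum_support {k R K : Type u} [Field k] [CommRing R] [Algebra k R]
    [Field K] [Algebra k K] {ι : Type u} (bK : Module.Basis ι k K) (x : R ⊗[k] K) :
    ∑ i ∈ ((bK.baseChange R).repr x).support,
      ((bK.baseChange R).repr x i) ⊗ₜ[k] bK i = x := by
  conv_rhs => rw [← (bK.baseChange R).linearCombination_repr x]
  rw [Finsupp.linearCombination_apply, Finsupp.sum]
  refine Finset.sum_congr rfl fun i _ => ?_
  rw [Module.Basis.baseChange_apply, TensorProduct.smul_tmul', smul_eq_mul, mul_one]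

set_option maxHeartbeats 1000000 in
/-- If `R` is a domain whose zero ideal is `Δ`-rational and `K/k` is a field extension with
`Frac(R) ⊗_k K` a domain, then every nonzero ideal of `R ⊗_k K` stable under `δ ⊗ 1` for all
`δ ∈ Δ` contains `r ⊗ 1` for some nonzero `r ∈ R`. -/
theorem exists_tmul_mem_of_deltaStable (k R K : Type u) [Field k] [CharZero k] [CommRing R]
    [IsDomain R] [Algebra k R] [Field K] [Algebra k K]
    (Δ : Set (Derivation k R R))
    (hdom : IsDomain ((FractionRing R) ⊗[k] K))
    (hrat : ∀ a b : R, b ≠ 0 → (∀ δ ∈ Δ, δ a * b = a * δ b) →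
      IsAlgebraic k (algebraMap R (FractionRing R) a / algebraMap R (FractionRing R) b))
    (I : Ideal (R ⊗[k] K)) (hI : I ≠ ⊥)
    (hstable : ∀ δ ∈ Δ, ∀ x ∈ I, δ.toLinearMap.rTensor K x ∈ I) :
    ∃ r : R, r ≠ 0 ∧ r ⊗ₜ[k] (1 : K) ∈ I := by
  classical
  haveI := hdom
  set L := FractionRing R with hL
  have hfinj : Function.Injective (algebraMap R L) := IsFractionRing.injective R L
  -- the base-change map φ : R ⊗ K → L ⊗ K
  set φ : R ⊗[k] K →ₐ[k] L ⊗[k] K :=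
    Algebra.TensorProduct.map (IsScalarTower.toAlgHom k R L) (AlgHom.id k K) with hφ
  have hφtmul : ∀ (r : R) (c : K), φ (r ⊗ₜ[k] c) = (algebraMap R L r) ⊗ₜ[k] c := by
    intro r c; simp [hφ]
  have hφinj : Function.Injective φ := by
    have h1 : Function.Injective
        (LinearMap.rTensor K (IsScalarTower.toAlgHom k R L).toLinearMap) :=
      Module.Flat.rTensor_preserves_injective_linearMap _ hfinj
    have h2 : φ.toLinearMap = LinearMap.rTensor K (IsScalarTower.toAlgHom k R L).toLinearMap :=
      TensorProduct.ext' fun r c => by simp [hφ]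
    intro a b hab
    apply h1
    have ha := DFunLike.congr_fun h2 a
    have hb := DFunLike.congr_fun h2 b
    simp only [AlgHom.toLinearMap_apply] at ha hb
    rw [← ha, ← hb]; exact hab
  -- basis of K over k and the corresponding coordinates
  set bK := Module.Basis.ofVectorSpace k K with hbK
  set b := bK.baseChange R with hb
  -- pick a nonzero element of I with minimal support
  have hex : ∃ n : ℕ, ∃ x, x ∈ I ∧ x ≠ 0 ∧ (b.repr x).support.card = n := by
    obtain ⟨x, hxI, hx0⟩ := (Submodule.ne_bot_iff I).mp hI
    exact ⟨_, x, hxI, hx0, rfl⟩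
  obtain ⟨x, hxI, hx0, hxcard⟩ := Nat.find_spec hex
  have hmin : ∀ z ∈ I, z ≠ 0 → (b.repr x).support.card ≤ (b.repr z).support.card := by
    intro z hzI hz0
    rw [hxcard]
    exact Nat.find_min' hex ⟨z, hzI, hz0, rfl⟩
  -- pick a coordinate of x
  have hreprx0 : b.repr x ≠ 0 := fun h => hx0 (b.repr.map_eq_zero_iff.mp h)
  obtain ⟨i0, hi0⟩ := Finsupp.support_nonempty_iff.mpr hreprx0
  set r1 := b.repr x i0 with hr1def
  have hr1 : r1 ≠ 0 := Finsupp.mem_support_iff.mp hi0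
  -- the key consequence of minimality and stability
  have key : ∀ δ ∈ Δ, ∀ i, δ (b.repr x i) * r1 = (b.repr x i) * δ r1 := by
    intro δ hδ i
    set z := (r1 ⊗ₜ[k] (1:K)) * (δ.toLinearMap.rTensor K x) - ((δ r1) ⊗ₜ[k] (1:K)) * x
      with hzdef
    have hzI : z ∈ I :=
      sub_mem (I.mul_mem_left _ (hstable δ hδ x hxI)) (I.mul_mem_left _ hxI)
    have hrepz : ∀ j, b.repr z j = r1 * δ (b.repr x j) - δ r1 * (b.repr x j) := by
      intro j
      rw [hzdef, tmul_one_mul_eq_smul, tmul_one_mul_eq_smul, map_sub, map_smul, map_smul]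
      simp only [Finsupp.coe_sub, Pi.sub_apply, Finsupp.coe_smul, Pi.smul_apply, smul_eq_mul]
      rw [hb, repr_rTensor_derivation]
    have hz0 : z = 0 := by
      by_contra hzne
      have hsub : (b.repr z).support ⊆ (b.repr x).support.erase i0 := by
        intro j hj
        rw [Finsupp.mem_support_iff, hrepz] at hj
        rw [Finset.mem_erase, Finsupp.mem_support_iff]
        constructor
        · rintro rfl
          exact hj (by rw [← hr1def]; ring)
        · intro h0
          exact hj (by rw [h0, map_zero, mul_zero, mul_zero, sub_zero])
      have hlt : (b.repr z).support.card < (b.repr x).support.card :=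
        lt_of_le_of_lt (Finset.card_le_card hsub) (Finset.card_erase_lt_of_mem hi0)
      exact absurd (hmin z hzI hzne) (not_le.mpr hlt)
    have h6 := hrepz i
    rw [hz0, map_zero] at h6
    simp only [Finsupp.coe_zero, Pi.zero_apply] at h6
    linear_combination -h6
  -- all coordinate ratios are algebraic over k
  have halg : ∀ i, IsAlgebraic k ((algebraMap R L (b.repr x i)) / (algebraMap R L r1)) :=
    fun i => hrat _ _ hr1 (fun δ hδ => key δ hδ i)
  -- move to L ⊗ K
  have hxsum : ∑ i ∈ (b.repr x).support, (b.repr x i) ⊗ₜ[k] bK i = x := by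
    rw [hb]; exact basis_sum_support bK x
  set y : L ⊗[k] K := ∑ i ∈ (b.repr x).support,
      ((algebraMap R L (b.repr x i)) / (algebraMap R L r1)) ⊗ₜ[k] bK i with hydef
  have hfr1 : algebraMap R L r1 ≠ 0 := fun h => hr1 (hfinj (by rw [h, map_zero]))
  have hy1 : ((algebraMap R L r1) ⊗ₜ[k] (1:K)) * y = φ x := by
    rw [hydef, Finset.mul_sum]
    have hterm : ∀ i ∈ (b.repr x).support,
        ((algebraMap R L r1) ⊗ₜ[k] (1:K)) *
          (((algebraMap R L (b.repr x i)) / (algebraMap R L r1)) ⊗ₜ[k] bK i)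
        = (algebraMap R L (b.repr x i)) ⊗ₜ[k] bK i := by
      intro i _
      rw [Algebra.TensorProduct.tmul_mul_tmul, one_mul, mul_div_cancel₀ _ hfr1]
    rw [Finset.sum_congr rfl hterm]
    conv_rhs => rw [← hxsum]
    rw [map_sum]
    exact Finset.sum_congr rfl fun i _ => (hφtmul _ _)
  have hφx0 : φ x ≠ 0 := fun h => hx0 (hφinj (by rw [h, map_zero]))
  have hy0 : y ≠ 0 := by
    intro h; exact hφx0 (by rw [← hy1, h, mul_zero])
  -- y is integral over K
  letI : Algebra K (L ⊗[k] K) := Algebra.TensorProduct.rightAlgebra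
  haveI : IsScalarTower k K (L ⊗[k] K) := Algebra.TensorProduct.right_isScalarTower
  have hyint : IsIntegral K y := by
    rw [hydef]
    refine Subalgebra.sum_mem (integralClosure K (L ⊗[k] K)) fun i _ => ?_
    have h1 : IsIntegral K
        (((algebraMap R L (b.repr x i)) / (algebraMap R L r1)) ⊗ₜ[k] (1:K)) := by
      have ha := (halg i).isIntegral
      have hb2 := ha.map (Algebra.TensorProduct.includeLeft (R := k) (S := k) (A := L) (B := K))
      rw [Algebra.TensorProduct.includeLeft_apply] at hb2
      exact hb2.tower_top
    have h2 : IsIntegral K ((1:L) ⊗ₜ[k] (bK i)) := by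
      rw [← Algebra.TensorProduct.includeRight_apply]
      exact isIntegral_algebraMap
    have h3 := h1.mul h2
    rwa [Algebra.TensorProduct.tmul_mul_tmul, mul_one, one_mul] at h3
  -- hence y is invertible
  have hyunit : ∃ v : L ⊗[k] K, y * v = 1 := by
    have hc0 : (minpoly K y).coeff 0 ≠ 0 := minpoly.coeff_zero_ne_zero hyint hy0
    have haev : Polynomial.aeval y (minpoly K y) = 0 := minpoly.aeval K y
    have hsum0 : y * Polynomial.aeval y (minpoly K y).divX
        + algebraMap K (L ⊗[k] K) ((minpoly K y).coeff 0) = 0 := by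
      rw [← haev]
      conv_rhs => rw [← Polynomial.X_mul_divX_add (minpoly K y)]
      rw [map_add, map_mul, Polynomial.aeval_X, Polynomial.aeval_C]
    refine ⟨Polynomial.aeval y (minpoly K y).divX
      * algebraMap K (L ⊗[k] K) (-((minpoly K y).coeff 0))⁻¹, ?_⟩
    have h4 : y * Polynomial.aeval y (minpoly K y).divX
        = algebraMap K (L ⊗[k] K) (-((minpoly K y).coeff 0)) := by
      rw [map_neg]
      exact eq_neg_of_add_eq_zero_left hsum0
    rw [← mul_assoc, h4, ← map_mul, mul_inv_cancel₀ (neg_ne_zero.mpr hc0), map_one]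
  -- clearing denominators
  have hclear : ∀ z : L ⊗[k] K, ∃ c : R, c ≠ 0 ∧ ∃ w : R ⊗[k] K,
      φ w = ((algebraMap R L c) ⊗ₜ[k] (1:K)) * z := by
    intro z
    induction z using TensorProduct.induction_on with
    | zero => exact ⟨1, one_ne_zero, 0, by simp⟩
    | tmul l c =>
      obtain ⟨⟨a, t⟩, ht⟩ := IsLocalization.surj (nonZeroDivisors R) l
      refine ⟨(t : R), nonZeroDivisors.ne_zero t.2, a ⊗ₜ[k] c, ?_⟩
      rw [hφtmul, Algebra.TensorProduct.tmul_mul_tmul, one_mul, ← ht, mul_comm l]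
    | add z1 z2 h1 h2 =>
      obtain ⟨c1, hc1, w1, hw1⟩ := h1
      obtain ⟨c2, hc2, w2, hw2⟩ := h2
      refine ⟨c1 * c2, mul_ne_zero hc1 hc2,
        (c2 ⊗ₜ[k] (1:K)) * w1 + (c1 ⊗ₜ[k] (1:K)) * w2, ?_⟩
      rw [map_add, map_mul, map_mul, hw1, hw2, hφtmul, hφtmul]
      have hsplit : (algebraMap R L (c1 * c2)) ⊗ₜ[k] (1:K)
          = ((algebraMap R L c1) ⊗ₜ[k] (1:K)) * ((algebraMap R L c2) ⊗ₜ[k] (1:K)) := by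
        rw [map_mul, Algebra.TensorProduct.tmul_mul_tmul, one_mul]
      rw [hsplit]; ring
  -- conclusion
  obtain ⟨v, hv⟩ := hyunit
  obtain ⟨c, hc0, w, hw⟩ := hclear v
  refine ⟨c * r1, mul_ne_zero hc0 hr1, ?_⟩
  have hwx : w * x = (c * r1) ⊗ₜ[k] (1:K) := by
    apply hφinj
    rw [map_mul, hw, ← hy1, hφtmul]
    have hsplit : (algebraMap R L (c * r1)) ⊗ₜ[k] (1:K)
        = ((algebraMap R L c) ⊗ₜ[k] (1:K)) * ((algebraMap R L r1) ⊗ₜ[k] (1:K)) := by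
      rw [map_mul, Algebra.TensorProduct.tmul_mul_tmul, one_mul]
    rw [hsplit, show ((algebraMap R L c) ⊗ₜ[k] (1:K)) * v
        * (((algebraMap R L r1) ⊗ₜ[k] (1:K)) * y)
      = ((algebraMap R L c) ⊗ₜ[k] (1:K)) * ((algebraMap R L r1) ⊗ₜ[k] (1:K)) * (y * v) by ring,
      hv, mul_one]
  rw [← hwx]
  exact I.mul_mem_left w hxI
end
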